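/- Let 0 < α < β and γ = αβ/(β − α). A nonempty closed convex set C ⊆ E is α-strongly convex and β-smooth if and only if there exists a nonempty closed convex γ-strongly convex set C₀ ⊆ E such that C = C₀ + closedBall(0, 1/β) (Minkowski sum). -/

import Mathlib

open Metric Set
open scoped RealInnerProductSpace Pointwise

noncomputable section

variable {F : Type*} [NormedAddCommGroup F] [InnerProductSpace ℝ F]

/-- The normal cone of a set `C` at a point `z`. -/
def normalCone (C : Set F) (z : F) : Set F :=
  {v | ∀ x ∈ C, ⟪v, x - z⟫ ≤ 0}

/-- A set `C` is `β`-smooth if at every boundary point `z`, every unit normal vector `n`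
gives a closed ball of radius `1/β` centered at `z - (1/β) n` contained in `C`. -/
def IsSmoothSet (β : ℝ) (C : Set F) : Prop :=
  ∀ z ∈ frontier C, ∀ n ∈ normalCone C z, ‖n‖ = 1 →
    closedBall (z - (1 / β) • n) (1 / β) ⊆ C

/-- A set `C` is `α`-strongly convex if at every boundary point `z`, every unit normal
vector `n` gives a closed ball of radius `1/α` centered at `z - (1/α) n` containing `C`. -/
def IsStronglyConvexSet (α : ℝ) (C : Set F) : Prop :=
  ∀ z ∈ frontier C, ∀ n ∈ normalCone C z, ‖n‖ = 1 →
    C ⊆ closedBall (z - (1 / α) • n) (1 / α)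

/-- `diam C ≤ D`, expressed pointwise. -/
def DiamLE (C : Set F) (D : ℝ) : Prop :=
  ∀ x ∈ C, ∀ y ∈ C, ‖x - y‖ ≤ D

/-- The `δ`-interior of a set: points whose closed `δ`-ball lies inside the set. -/
def deltaInterior (δ : ℝ) (C : Set F) : Set F :=
  {x | closedBall x δ ⊆ C}

/-- The set `C` interpolates the data: `z i ∈ C` with normal vector `v i`, and
`x k` lies in the `δ k`-interior of `C`. -/
def InterpolatedBy {ι κ : Type*} (C : Set F) (z v : ι → F) (x : κ → F) (δ : κ → ℝ) : Prop :=
  (∀ i, z i ∈ C ∧ v i ∈ normalCone C (z i)) ∧ ∀ k, x k ∈ deltaInterior (δ k) C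

/-- The interpolation conditions `Interp(α, β, D; λ)`, with `n i = v i / ‖v i‖`,
`r = 1/α - 1/β` and `s k = max 0 (δ k - 1/β)`. -/
def InterpCond {ι κ : Type*} (α β D lam : ℝ) (z v : ι → F) (x : κ → F) (δ : κ → ℝ) : Prop :=
  ∃ w : κ → F,
    (∀ i j, ‖z i - (1 / α) • (‖v i‖⁻¹ • v i) - (z j - (1 / β) • (‖v j‖⁻¹ • v j))‖ ≤
      1 / α - 1 / β) ∧
    (∀ i k, ‖z i - (1 / α) • (‖v i‖⁻¹ • v i) - w k‖ ≤
      (1 / α - 1 / β) - max 0 (δ k - 1 / β)) ∧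
    (∀ k, ‖x k - w k‖ ≤ 1 / β - δ k + max 0 (δ k - 1 / β)) ∧
    (∀ i j, ‖z i - (1 / β) • (‖v i‖⁻¹ • v i) - (z j - (1 / β) • (‖v j‖⁻¹ • v j))‖ ≤
      lam * (D - 2 / β)) ∧
    (∀ i k, ‖z i - (1 / β) • (‖v i‖⁻¹ • v i) - w k‖ ≤
      lam * (D - 2 / β) - max 0 (δ k - 1 / β)) ∧
    (∀ k l, ‖w k - w l‖ ≤ lam * (D - 2 / β) - max 0 (δ k - 1 / β) - max 0 (δ l - 1 / β))

/-! For the forward direction take `C₀ = deltaInterior (1/β) C`, the centres of the `1/β`-balls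
inside `C`. Smoothness makes `C` the union of these balls: if the `1/β`-ball around `x ∈ C`
leaves `C`, the boundary point `q` nearest to `x` is at distance `r ≤ 1/β` from `x`, in the
direction of the unit normal `n` at `q`, so `x` lies in the `1/β`-ball centred at `q - n/β`.

For any `C₀`, a unit normal `n` of `C₀ + closedBall 0 r` at `z` is a normal of `C₀` at
`z - r • n`, and a unit normal `n` of `C₀` at `z₀` is one of the sum at `z₀ + r • n`. Hence
the supporting balls of `C₀` and of `C₀ + closedBall 0 r` at corresponding boundary points are
concentric with radii differing by `r`, and `1/γ = 1/α - 1/β` is exactly this relation. -/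

open Filter
open scoped Topology

section Normed

variable {E : Type*} [NormedAddCommGroup E] {C : Set E} {δ : ℝ}

theorem deltaInterior_eq_biInter :
    deltaInterior δ C = ⋂ b ∈ closedBall (0 : E) δ, (· + b) ⁻¹' C := by
  ext x
  simp only [mem_iInter₂, mem_preimage]
  change closedBall x δ ⊆ C ↔ _
  rw [← singleton_add_closedBall_zero, singleton_add, image_subset_iff]
  rfl

theorem IsClosed.deltaInterior (hC : IsClosed C) (δ : ℝ) : IsClosed (deltaInterior δ C) := by
  rw [deltaInterior_eq_biInter]
  exact isClosed_biInter fun b _ => hC.preimage (continuous_add_const b)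

theorem deltaInterior_add_closedBall_subset : deltaInterior δ C + closedBall 0 δ ⊆ C := by
  rintro _ ⟨y, hy, b, hb, rfl⟩
  exact hy (by rw [← singleton_add_closedBall_zero]; exact add_mem_add rfl hb)

variable [NormedSpace ℝ E]

theorem Convex.deltaInterior (hC : Convex ℝ C) (δ : ℝ) : Convex ℝ (deltaInterior δ C) := by
  rw [deltaInterior_eq_biInter]
  exact convex_iInter₂ fun b _ => hC.translate_preimage_left b

theorem smul_mem_closedBall_zero {r : ℝ} {n : E} (hr : 0 ≤ r) (hn : ‖n‖ = 1) :
    r • n ∈ closedBall 0 r := by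
  rw [mem_closedBall_zero_iff, norm_smul, hn, mul_one, Real.norm_of_nonneg hr]

theorem dist_add_le_of_closedBall_subset_closedBall [Nontrivial E] {x c : E} {r R : ℝ}
    (hr : 0 ≤ r) (h : closedBall x r ⊆ closedBall c R) : dist x c + r ≤ R := by
  obtain ⟨u, hu1, hxu⟩ : ∃ u : E, ‖u‖ = 1 ∧ x - c = ‖x - c‖ • u := by
    by_cases hxc : x - c = 0
    · obtain ⟨u, hu⟩ := exists_norm_eq E zero_le_one
      exact ⟨u, hu, by rw [hxc, norm_zero, zero_smul]⟩
    · refine ⟨‖x - c‖⁻¹ • (x - c), norm_smul_inv_norm hxc, ?_⟩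
      rw [smul_smul, mul_inv_cancel₀ (norm_ne_zero_iff.2 hxc), one_smul]
  have hmem : x + r • u ∈ closedBall c R := h <| by
    rw [mem_closedBall, dist_eq_norm, add_sub_cancel_left, norm_smul, hu1, mul_one,
      Real.norm_of_nonneg hr]
  rwa [mem_closedBall, dist_eq_norm, add_sub_right_comm, hxu, ← add_smul, norm_smul, hu1,
    mul_one, Real.norm_of_nonneg (by positivity), ← dist_eq_norm] at hmem

theorem exists_notMem_interior_dist_eq_infDist_compl [ProperSpace E] {x : E} (hC : IsClosed C)
    (hx : x ∈ C) (hCc : Cᶜ.Nonempty) :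
    ∃ q ∈ C, q ∉ interior C ∧ dist x q = infDist x Cᶜ := by
  obtain ⟨q, hq, hxq⟩ := isClosed_closure.exists_infDist_eq_dist (hCc.mono subset_closure) x
  rw [infDist_closure] at hxq
  have hqC : q ∈ closure C :=
    closedBall_infDist_compl_subset_closure hx (by rw [mem_closedBall, dist_comm, hxq])
  rw [closure_compl] at hq
  exact ⟨q, hC.closure_eq ▸ hqC, hq, hxq.symm⟩

end Normed

section InnerProduct

variable {A B C C₀ : Set F} {z v n : F} {r β : ℝ}

theorem smul_mem_normalCone (hv : v ∈ normalCone C z) {c : ℝ} (hc : 0 ≤ c) :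
    c • v ∈ normalCone C z := fun x hx => by
  rw [real_inner_smul_left]
  exact mul_nonpos_of_nonneg_of_nonpos hc (hv x hx)

theorem mem_normalCone_add_iff {a b : F} (ha : a ∈ A) (hb : b ∈ B) :
    v ∈ normalCone (A + B) (a + b) ↔ v ∈ normalCone A a ∧ v ∈ normalCone B b := by
  refine ⟨fun hv => ⟨fun x hx => ?_, fun y hy => ?_⟩, ?_⟩
  · simpa using hv _ (add_mem_add hx hb)
  · simpa using hv _ (add_mem_add ha hy)
  · rintro ⟨hvA, hvB⟩ _ ⟨x, hx, y, hy, rfl⟩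
    rw [add_sub_add_comm, inner_add_right]
    linarith [hvA x hx, hvB y hy]

theorem mem_normalCone_closedBall_zero (hn : ‖n‖ = 1) :
    n ∈ normalCone (closedBall 0 r) (r • n) := fun x hx => by
  rw [inner_sub_right, real_inner_smul_right, real_inner_self_eq_norm_sq, hn]
  have := real_inner_le_norm n x
  rw [hn, one_mul] at this
  linarith [mem_closedBall_zero_iff.1 hx]

theorem mem_frontier_of_mem_normalCone (hz : z ∈ C) (hv : v ∈ normalCone C z) (hv0 : v ≠ 0) :
    z ∈ frontier C := by
  refine ⟨subset_closure hz, fun hint => ?_⟩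
  have hline : Tendsto (fun t : ℝ => z + t • v) (𝓝 0) (𝓝 z) := by
    have : Continuous fun t : ℝ => z + t • v := by fun_prop
    simpa using this.tendsto 0
  have hev : ∀ᶠ t in 𝓝[>] (0 : ℝ), z + t • v ∈ C :=
    nhdsWithin_le_nhds (hline.eventually (mem_interior_iff_mem_nhds.1 hint))
  obtain ⟨t, htC, ht⟩ := (hev.and eventually_mem_nhdsWithin).exists
  have := hv _ htC
  rw [add_sub_cancel_left, real_inner_smul_right, real_inner_self_eq_norm_sq] at this
  have : 0 < t * ‖v‖ ^ 2 := mul_pos ht (by positivity)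
  linarith

/-- Equality in Cauchy–Schwarz: `r ≤ ⟪n, b⟫ ≤ ‖b‖ ≤ r`. -/
theorem eq_smul_of_mem_normalCone {y b : F} (hn : n ∈ normalCone C (y + b)) (hn1 : ‖n‖ = 1)
    (hb : ‖b‖ ≤ r) (hy : y + r • n ∈ C) : b = r • n := by
  have hnormal := hn _ hy
  rw [add_sub_add_left_eq_sub, inner_sub_right, real_inner_smul_right,
    real_inner_self_eq_norm_sq, hn1] at hnormal
  have hcs := real_inner_le_norm n b
  rw [hn1, one_mul] at hcs
  have hbr : ‖b‖ = r := by linarith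
  have heq := inner_eq_norm_mul_iff_real.1 (show ⟪n, b⟫ = ‖n‖ * ‖b‖ by rw [hn1]; linarith)
  rwa [hn1, one_smul, hbr, eq_comm] at heq

theorem sub_smul_mem_of_mem_normalCone_add_closedBall (hr : 0 ≤ r) (hz : z ∈ C₀ + closedBall 0 r)
    (hn : n ∈ normalCone (C₀ + closedBall 0 r) z) (hn1 : ‖n‖ = 1) :
    z - r • n ∈ C₀ ∧ n ∈ normalCone C₀ (z - r • n) := by
  obtain ⟨y, hy, b, hb, rfl⟩ := hz
  obtain rfl : b = r • n := eq_smul_of_mem_normalCone hn hn1 (mem_closedBall_zero_iff.1 hb)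
    (add_mem_add hy (smul_mem_closedBall_zero hr hn1))
  rw [add_sub_cancel_right]
  exact ⟨hy, ((mem_normalCone_add_iff hy hb).1 hn).1⟩

theorem Convex.exists_ne_zero_mem_normalCone_of_interior_nonempty [CompleteSpace F]
    (hC : Convex ℝ C) (hint : (interior C).Nonempty) (hz : z ∉ interior C) :
    ∃ v ≠ 0, v ∈ normalCone C z := by
  obtain ⟨w, hw⟩ := hint
  obtain ⟨f, hf⟩ := geometric_hahn_banach_open_point hC.interior isOpen_interior hz
  set v := (InnerProductSpace.toDual ℝ F).symm f
  have hv : ∀ x, ⟪v, x⟫ = f x := fun x => InnerProductSpace.toDual_symm_apply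
  have hle : C ⊆ {x | f x ≤ f z} :=
    calc C ⊆ closure (interior C) :=
          hC.closure_interior_eq_closure_of_nonempty_interior ⟨w, hw⟩ ▸ subset_closure
      _ ⊆ {x | f x ≤ f z} :=
          closure_minimal (fun x hx => (hf x hx).le) (isClosed_le f.continuous continuous_const)
  refine ⟨v, fun h => (hf w hw).ne ?_, fun x hx => ?_⟩
  · rw [← hv, ← hv, h, inner_zero_left, inner_zero_left]
  · rw [inner_sub_right, hv, hv]
    exact sub_nonpos.2 (hle hx)

theorem exists_ne_zero_mem_normalCone_of_affineSpan_ne_top [FiniteDimensional ℝ F]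
    (hspan : affineSpan ℝ C ≠ ⊤) (hz : z ∈ C) : ∃ v ≠ 0, v ∈ normalCone C z := by
  have horth : (affineSpan ℝ C).directionᗮ ≠ ⊥ := fun h =>
    hspan <| (AffineSubspace.direction_eq_top_iff_of_nonempty ⟨z, subset_affineSpan ℝ C hz⟩).1
      (Submodule.orthogonal_eq_bot_iff.1 h)
  obtain ⟨v, hv, hv0⟩ := Submodule.exists_mem_ne_zero_of_ne_bot horth
  refine ⟨v, hv0, fun x hx => ?_⟩
  exact ((Submodule.mem_orthogonal' _ v).1 hv _ (AffineSubspace.vsub_mem_direction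
    (subset_affineSpan ℝ C hx) (subset_affineSpan ℝ C hz))).le

theorem Convex.exists_unit_mem_normalCone [FiniteDimensional ℝ F] (hC : Convex ℝ C)
    (hzC : z ∈ C) (hz : z ∉ interior C) : ∃ n, ‖n‖ = 1 ∧ n ∈ normalCone C z := by
  obtain ⟨v, hv0, hv⟩ : ∃ v ≠ 0, v ∈ normalCone C z := by
    by_cases hint : (interior C).Nonempty
    · exact hC.exists_ne_zero_mem_normalCone_of_interior_nonempty hint hz
    · exact exists_ne_zero_mem_normalCone_of_affineSpan_ne_top
        (hC.interior_nonempty_iff_affineSpan_eq_top.not.1 hint) hzC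
  exact ⟨‖v‖⁻¹ • v, norm_smul_inv_norm hv0, smul_mem_normalCone hv (by positivity)⟩

theorem IsSmoothSet.subset_deltaInterior_add_closedBall [FiniteDimensional ℝ F] (hβ : 0 < β)
    (hC : IsClosed C) (hCv : Convex ℝ C) (h : IsSmoothSet β C) :
    C ⊆ deltaInterior (1 / β) C + closedBall 0 (1 / β) := by
  intro x hx
  suffices ∃ y ∈ deltaInterior (1 / β) C, dist x y ≤ 1 / β by
    obtain ⟨y, hy, hxy⟩ := this
    exact ⟨y, hy, x - y, by rwa [mem_closedBall_zero_iff, ← dist_eq_norm], add_sub_cancel y x⟩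
  by_cases hball : closedBall x (1 / β) ⊆ C
  · exact ⟨x, hball, by rw [dist_self]; positivity⟩
  obtain ⟨p, hpx, hpC⟩ := not_subset.1 hball
  obtain ⟨q, hqC, hqi, hxq⟩ := exists_notMem_interior_dist_eq_infDist_compl hC hx ⟨p, hpC⟩
  set r := infDist x Cᶜ
  have hr : r ≤ 1 / β := (infDist_le_dist_of_mem hpC).trans (mem_closedBall'.1 hpx)
  obtain ⟨n, hn1, hn⟩ := hCv.exists_unit_mem_normalCone hqC hqi
  have hqx : q - x = r • n := by
    refine eq_smul_of_mem_normalCone (by rwa [add_sub_cancel]) hn1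
      (by rw [← dist_eq_norm', hxq]) ?_
    refine hC.closure_eq ▸ closedBall_infDist_compl_subset_closure hx ?_
    rw [mem_closedBall, dist_eq_norm, add_sub_cancel_left, norm_smul, hn1, mul_one,
      Real.norm_of_nonneg infDist_nonneg]
  refine ⟨q - (1 / β) • n, h q ⟨subset_closure hqC, hqi⟩ n hn hn1, ?_⟩
  rw [dist_eq_norm, show x - (q - (1 / β) • n) = (1 / β - r) • n by rw [sub_smul, ← hqx]; abel,
    norm_smul, hn1, mul_one, Real.norm_of_nonneg (sub_nonneg.2 hr)]
  linarith [infDist_nonneg (x := x) (s := Cᶜ)]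

theorem IsSmoothSet.eq_deltaInterior_add_closedBall [FiniteDimensional ℝ F] (hβ : 0 < β)
    (hC : IsClosed C) (hCv : Convex ℝ C) (h : IsSmoothSet β C) :
    C = deltaInterior (1 / β) C + closedBall 0 (1 / β) :=
  (h.subset_deltaInterior_add_closedBall hβ hC hCv).antisymm deltaInterior_add_closedBall_subset

theorem isSmoothSet_add_closedBall (hβ : 0 ≤ β) (hC : IsClosed (C₀ + closedBall 0 (1 / β))) :
    IsSmoothSet β (C₀ + closedBall 0 (1 / β)) := by
  intro z hz n hn hn1
  have hy := (sub_smul_mem_of_mem_normalCone_add_closedBall (by positivity)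
    (hC.frontier_subset hz) hn hn1).1
  rw [← singleton_add_closedBall_zero]
  exact add_subset_add_right (singleton_subset_iff.2 hy)

theorem IsStronglyConvexSet.add_closedBall {a : ℝ} (hr : 0 ≤ r)
    (hC : IsClosed (C₀ + closedBall 0 r)) (h : IsStronglyConvexSet a C₀) :
    IsStronglyConvexSet (1 / (1 / a + r)) (C₀ + closedBall 0 r) := by
  intro z hz n hn hn1
  obtain ⟨hy, hny⟩ :=
    sub_smul_mem_of_mem_normalCone_add_closedBall hr (hC.frontier_subset hz) hn hn1
  have hsub := h _ (mem_frontier_of_mem_normalCone hy hny (by rintro rfl; simp at hn1)) n hny hn1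
  rintro _ ⟨x, hx, b, hb, rfl⟩
  have hcentre : z - (1 / (1 / (1 / a + r))) • n = (z - r • n - (1 / a) • n) + 0 := by
    rw [one_div_one_div]; module
  rw [mem_closedBall, hcentre, one_div_one_div]
  exact (dist_add_add_le _ _ _ _).trans (add_le_add (mem_closedBall.1 (hsub hx)) hb)

theorem IsStronglyConvexSet.of_add_closedBall {a : ℝ} (hC₀ : IsClosed C₀) (hr : 0 ≤ r)
    (h : IsStronglyConvexSet a (C₀ + closedBall 0 r)) :
    IsStronglyConvexSet (1 / (1 / a - r)) C₀ := by
  intro z hz n hn hn1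
  have : Nontrivial F := nontrivial_of_ne n 0 (by rintro rfl; simp at hn1)
  have hzC₀ := hC₀.frontier_subset hz
  have hrn := smul_mem_closedBall_zero hr hn1
  have hn' : n ∈ normalCone (C₀ + closedBall 0 r) (z + r • n) :=
    (mem_normalCone_add_iff hzC₀ hrn).2 ⟨hn, mem_normalCone_closedBall_zero hn1⟩
  have hsub := h _ (mem_frontier_of_mem_normalCone (add_mem_add hzC₀ hrn) hn'
    (by rintro rfl; simp at hn1)) n hn' hn1
  intro x hx
  have hball : closedBall x r ⊆ closedBall (z + r • n - (1 / a) • n) (1 / a) := by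
    rw [← singleton_add_closedBall_zero]
    exact (add_subset_add_right (singleton_subset_iff.2 hx)).trans hsub
  have := dist_add_le_of_closedBall_subset_closedBall hr hball
  rw [mem_closedBall, one_div_one_div,
    show z - (1 / a - r) • n = z + r • n - (1 / a) • n by module]
  linarith

end InnerProduct

theorem stronglyConvex_and_smooth_iff_minkowski_general {d : ℕ} (α β : ℝ)
    (hα : 0 < α) (hαβ : α < β) (C : Set (EuclideanSpace ℝ (Fin d))) (hne : C.Nonempty)
    (hcl : IsClosed C) (hcv : Convex ℝ C) :
    (IsStronglyConvexSet α C ∧ IsSmoothSet β C) ↔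
      ∃ C₀ : Set (EuclideanSpace ℝ (Fin d)), C₀.Nonempty ∧ IsClosed C₀ ∧ Convex ℝ C₀ ∧
        IsStronglyConvexSet (α * β / (β - α)) C₀ ∧ C = C₀ + closedBall 0 (1 / β) := by
  have hβ : 0 < β := hα.trans hαβ
  have hγ : α * β / (β - α) = 1 / (1 / α - 1 / β) := by
    field_simp [(sub_pos.2 hαβ).ne']
  constructor
  · rintro ⟨hsc, hsm⟩
    have hC := hsm.eq_deltaInterior_add_closedBall hβ hcl hcv
    refine ⟨deltaInterior (1 / β) C, (hC ▸ hne).of_add_left, hcl.deltaInterior _,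
      hcv.deltaInterior _, ?_, hC⟩
    rw [hγ]
    exact (hC ▸ hsc).of_add_closedBall (hcl.deltaInterior _) (by positivity)
  · rintro ⟨C₀, -, -, -, hsc₀, rfl⟩
    refine ⟨?_, isSmoothSet_add_closedBall hβ.le hcl⟩
    have hα' : α = 1 / (1 / (α * β / (β - α)) + 1 / β) := by
      rw [hγ, one_div_one_div, sub_add_cancel, one_div_one_div]
    rw [hα']
    exact hsc₀.add_closedBall (by positivity) hcl

/-- A nonempty closed convex set `C` is `α`-strongly convex and `β`-smooth (with
`0 < α < β`) iff it is the Minkowski sum of a nonempty closed convex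
`αβ/(β-α)`-strongly convex set and a closed ball of radius `1/β`. -/
theorem stronglyConvex_and_smooth_iff_minkowski {d : ℕ} (hd : 1 ≤ d) (α β : ℝ)
    (hα : 0 < α) (hαβ : α < β) (C : Set (EuclideanSpace ℝ (Fin d))) (hne : C.Nonempty)
    (hcl : IsClosed C) (hcv : Convex ℝ C) :
    (IsStronglyConvexSet α C ∧ IsSmoothSet β C) ↔
      ∃ C₀ : Set (EuclideanSpace ℝ (Fin d)), C₀.Nonempty ∧ IsClosed C₀ ∧ Convex ℝ C₀ ∧
        IsStronglyConvexSet (α * β / (β - α)) C₀ ∧ C = C₀ + closedBall 0 (1 / β) :=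
  stronglyConvex_and_smooth_iff_minkowski_general α β hα hαβ C hne hcl hcv
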